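/- The function K2(s) - 1/3 = 4/s^2 - 2·coth(s/2)/s is even and strictly negative for all real s ≠ 0. -/

import Mathlib

/-! With `x = s / 2`, `K2third s = (x⁻¹ - coth x) / x`, and `x coth x > 1` for `x > 0` because
`x cosh x - sinh x` vanishes at `0` and has derivative `x sinh x > 0`. Evenness reduces the case
`s < 0` to `s > 0`. -/

noncomputable def K2third (s : ℝ) : ℝ :=
  4 / s ^ 2 - 2 * (Real.cosh (s/2) / Real.sinh (s/2)) / s

open Real Set

lemma Real.sinh_lt_mul_cosh {x : ℝ} (hx : 0 < x) : sinh x < x * cosh x := by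
  have hmono : StrictMonoOn (fun y : ℝ => y * cosh y - sinh y) (Ici 0) := by
    refine strictMonoOn_of_deriv_pos (convex_Ici 0) (by fun_prop) fun y hy => ?_
    rw [interior_Ici, mem_Ioi] at hy
    have hderiv : HasDerivAt (fun y : ℝ => y * cosh y - sinh y)
        (1 * cosh y + y * sinh y - cosh y) y :=
      ((hasDerivAt_id y).mul (hasDerivAt_cosh y)).sub (hasDerivAt_sinh y)
    rw [hderiv.deriv]
    nlinarith [sinh_pos_iff.2 hy]
  simpa using hmono self_mem_Ici (mem_Ici.2 hx.le) hx

lemma K2third_neg (s : ℝ) : K2third (-s) = K2third s := by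
  rw [K2third, K2third, neg_div, cosh_neg, sinh_neg, neg_sq]
  field_simp

lemma K2third_eq_div {s : ℝ} (hs : s ≠ 0) :
    K2third s = 2 * (2 * sinh (s / 2) - s * cosh (s / 2)) / (s ^ 2 * sinh (s / 2)) := by
  have hsinh : sinh (s / 2) ≠ 0 := by simpa using hs
  rw [K2third]
  field_simp
  ring

lemma K2third_lt_zero_of_pos {s : ℝ} (hs : 0 < s) : K2third s < 0 := by
  have hx : 0 < s / 2 := half_pos hs
  have hkey := sinh_lt_mul_cosh hx
  rw [K2third_eq_div hs.ne']
  refine div_neg_of_neg_of_pos ?_ (by positivity)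
  linarith

lemma K2third_lt_zero {s : ℝ} (hs : s ≠ 0) : K2third s < 0 := by
  rcases hs.lt_or_gt with hneg | hpos
  · rw [← K2third_neg]
    exact K2third_lt_zero_of_pos (neg_pos.2 hneg)
  · exact K2third_lt_zero_of_pos hpos

theorem stmt_3 :
    (∀ s : ℝ, s ≠ 0 → K2third (-s) = K2third s) ∧
    (∀ s : ℝ, s ≠ 0 → K2third s < 0) :=
  ⟨fun s _ => K2third_neg s, fun _ hs => K2third_lt_zero hs⟩
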